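/- Let α ≥ 1 and let u ∈ H¹(ℝ) (complex-valued). Then |u|^α u ∈ H¹(ℝ) and ‖|u|^α u‖_{H¹} ≤ c₁^α (α+2) ‖u‖_{H¹}^{α+1}, where c₁ is a constant such that ‖f‖_{L^∞} ≤ c₁‖f‖_{H¹} for all f ∈ H¹(ℝ). -/

import Mathlib

open MeasureTheory

def InH1 (f : ℝ → ℂ) : Prop :=
  Differentiable ℝ f ∧ MemLp f 2 volume ∧ MemLp (deriv f) 2 volume

noncomputable def H1Norm (f : ℝ → ℂ) : ℝ :=
  Real.sqrt ((∫ x : ℝ, ‖f x‖ ^ 2) + ∫ x : ℝ, ‖deriv f x‖ ^ 2)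

open Filter Asymptotics in
lemma aux_hasDerivAt (α : ℝ) (hα : 1 ≤ α) (u : ℝ → ℂ) (hd : Differentiable ℝ u) (x : ℝ) :
    ∃ d : ℂ, HasDerivAt (fun y => (‖u y‖ ^ α : ℝ) • u y) d x ∧
      ‖d‖ ≤ (α + 2) * ‖u x‖ ^ α * ‖deriv u x‖ := by
  have hα0 : (0:ℝ) ≤ α := by linarith
  by_cases hx : u x = 0
  · refine ⟨0, ?_, ?_⟩
    · rw [hasDerivAt_iff_isLittleO]
      have h1 : Filter.Tendsto (fun y => ‖u y‖ ^ α) (nhds x) (nhds 0) := by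
        have h := ((hd x).continuousAt.norm).rpow_const (Or.inr hα0)
        have := h.tendsto
        rwa [hx, norm_zero, Real.zero_rpow (by linarith : α ≠ 0)] at this
      have h3 : (fun y => ‖u y‖ ^ α) =o[nhds x] (fun _ => (1:ℝ)) :=
        Asymptotics.isLittleO_one_iff ℝ |>.mpr h1
      have h2 : (fun y => u y) =O[nhds x] fun y => y - x := by
        have := (hd x).hasDerivAt.hasFDerivAt.isBigO_sub
        simpa [hx] using this
      have := h3.smul_isBigO h2
      simp only [hx, norm_zero, Real.zero_rpow (by linarith : α ≠ 0), zero_smul, smul_zero,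
        sub_zero]
      simpa using this
    · simp [hx, Real.zero_rpow (by linarith : α ≠ 0)]
  · have hNx : ‖u x‖ ≠ 0 := norm_ne_zero_iff.mpr hx
    have hNpos : 0 < ‖u x‖ := norm_pos_iff.mpr hx
    have hdn : DifferentiableAt ℝ (fun z : ℂ => ‖z‖) (u x) :=
      (contDiffAt_norm (𝕜 := ℂ) (n := 1) hx).differentiableAt one_ne_zero
    have hL : ‖fderiv ℝ (fun z : ℂ => ‖z‖) (u x)‖ ≤ 1 := by
      have := norm_fderiv_le_of_lipschitz (E := ℂ) ℝ (lipschitzWith_one_norm (E := ℂ))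
        (x₀ := u x)
      simpa using this
    have hN : HasDerivAt (fun y => ‖u y‖) (fderiv ℝ (fun z : ℂ => ‖z‖) (u x) (deriv u x)) x :=
      hdn.hasFDerivAt.comp_hasDerivAt x (hd x).hasDerivAt
    set n' : ℝ := fderiv ℝ (fun z : ℂ => ‖z‖) (u x) (deriv u x) with hn'def
    have hn' : |n'| ≤ ‖deriv u x‖ := by
      calc |n'| ≤ ‖fderiv ℝ (fun z : ℂ => ‖z‖) (u x)‖ * ‖deriv u x‖ :=
            (fderiv ℝ (fun z : ℂ => ‖z‖) (u x)).le_opNorm _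
        _ ≤ 1 * ‖deriv u x‖ := mul_le_mul_of_nonneg_right hL (norm_nonneg _)
        _ = ‖deriv u x‖ := one_mul _
    have hP : HasDerivAt (fun y => ‖u y‖ ^ α) (n' * α * ‖u x‖ ^ (α - 1)) x :=
      hN.rpow_const (Or.inr hα)
    have hg := hP.smul (hd x).hasDerivAt
    refine ⟨_, hg, ?_⟩
    have hr1 : (0:ℝ) ≤ ‖u x‖ ^ (α - 1) := Real.rpow_nonneg (norm_nonneg _) _
    have hr2 : (0:ℝ) ≤ ‖u x‖ ^ α := Real.rpow_nonneg (norm_nonneg _) _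
    have hkey : ‖u x‖ ^ (α - 1) * ‖u x‖ = ‖u x‖ ^ α := by
      rw [← Real.rpow_add_one hNx]; norm_num
    have h6 : |n'| * (‖u x‖ ^ (α - 1) * ‖u x‖) ≤ ‖deriv u x‖ * ‖u x‖ ^ α := by
      rw [hkey]; exact mul_le_mul_of_nonneg_right hn' hr2
    have hb1 : ‖(‖u x‖ ^ α : ℝ) • deriv u x‖ = ‖u x‖ ^ α * ‖deriv u x‖ := by
      rw [norm_smul, Real.norm_eq_abs, abs_of_nonneg hr2]
    have hb2 : ‖(n' * α * ‖u x‖ ^ (α - 1)) • u x‖ ≤ α * (‖u x‖ ^ α * ‖deriv u x‖) := by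
      rw [norm_smul, Real.norm_eq_abs, abs_mul, abs_mul, abs_of_nonneg hr1, abs_of_nonneg hα0]
      nlinarith [mul_le_mul_of_nonneg_left h6 hα0]
    calc ‖(‖u x‖ ^ α : ℝ) • deriv u x + (n' * α * ‖u x‖ ^ (α - 1)) • u x‖
        ≤ ‖(‖u x‖ ^ α : ℝ) • deriv u x‖ + ‖(n' * α * ‖u x‖ ^ (α - 1)) • u x‖ := norm_add_le _ _
      _ ≤ (α + 2) * ‖u x‖ ^ α * ‖deriv u x‖ := by
          rw [hb1]
          nlinarith [hb2, mul_nonneg hr2 (norm_nonneg (deriv u x))]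

theorem stmt_11 (α : ℝ) (hα : 1 ≤ α) (c₁ : ℝ)
    (hc₁ : ∀ f : ℝ → ℂ, InH1 f → ∀ x, ‖f x‖ ≤ c₁ * H1Norm f)
    (u : ℝ → ℂ) (hu : InH1 u) :
    InH1 (fun x => (‖u x‖ ^ α : ℝ) • u x) ∧
      H1Norm (fun x => (‖u x‖ ^ α : ℝ) • u x) ≤ c₁ ^ α * (α + 2) * H1Norm u ^ (α + 1) := by
  have hα0 : (0:ℝ) ≤ α := by linarith
  by_cases hz : ∀ x, u x = 0
  · have hu0 : u = fun _ => (0:ℂ) := funext hz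
    subst hu0
    have hg0 : (fun x : ℝ => (‖(0:ℂ)‖ ^ α : ℝ) • (0:ℂ)) = fun _ : ℝ => (0:ℂ) := by
      funext x; simp
    rw [hg0]
    have hdc : deriv (fun _ : ℝ => (0:ℂ)) = fun _ => (0:ℂ) := by
      funext x; simp
    constructor
    · exact ⟨differentiable_const 0, MemLp.zero', by rw [hdc]; exact MemLp.zero'⟩
    · have h1 : H1Norm (fun _ : ℝ => (0:ℂ)) = 0 := by
        simp [H1Norm, hdc]
      rw [h1, Real.zero_rpow (by linarith : α + 1 ≠ 0), mul_zero]
  · push_neg at hz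
    obtain ⟨x₀, hx₀⟩ := hz
    set g : ℝ → ℂ := fun x => (‖u x‖ ^ α : ℝ) • u x with hgdef
    set M : ℝ := c₁ * H1Norm u with hMdef
    have hM : ∀ x, ‖u x‖ ≤ M := hc₁ u hu
    have hMpos : 0 < M := lt_of_lt_of_le (norm_pos_iff.mpr hx₀) (hM x₀)
    have hHnn : 0 ≤ H1Norm u := Real.sqrt_nonneg _
    have hHpos : 0 < H1Norm u := by
      rcases hHnn.lt_or_eq with h | h
      · exact h
      · exfalso; rw [hMdef, ← h, mul_zero] at hMpos; exact lt_irrefl 0 hMpos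
    have hc₁pos : 0 < c₁ := by
      by_contra h
      push_neg at h
      nlinarith
    have hMa : (0:ℝ) ≤ M ^ α := Real.rpow_nonneg hMpos.le _
    -- differentiability and derivative bound
    have hdiff : Differentiable ℝ g := fun x =>
      ((aux_hasDerivAt α hα u hu.1 x).choose_spec.1).differentiableAt
    have hbnd : ∀ x, ‖deriv g x‖ ≤ (α + 2) * ‖u x‖ ^ α * ‖deriv u x‖ := by
      intro x
      obtain ⟨d, h1, h2⟩ := aux_hasDerivAt α hα u hu.1 x
      rwa [h1.deriv]
    have hbnd' : ∀ x, ‖deriv g x‖ ≤ ((α + 2) * M ^ α) * ‖deriv u x‖ := by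
      intro x
      refine (hbnd x).trans ?_
      have h := Real.rpow_le_rpow (norm_nonneg (u x)) (hM x) hα0
      have h2 := mul_le_mul_of_nonneg_right h (norm_nonneg (deriv u x))
      nlinarith [norm_nonneg (deriv u x)]
    have hgb : ∀ x, ‖g x‖ = ‖u x‖ ^ α * ‖u x‖ := by
      intro x
      rw [hgdef]
      simp only [norm_smul, Real.norm_eq_abs, abs_of_nonneg (Real.rpow_nonneg (norm_nonneg _) α)]
    have hgb' : ∀ x, ‖g x‖ ≤ M ^ α * ‖u x‖ := by
      intro x
      rw [hgb x]
      have h := Real.rpow_le_rpow (norm_nonneg (u x)) (hM x) hα0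
      nlinarith [norm_nonneg (u x)]
    -- MemLp
    have hgm : AEStronglyMeasurable g volume := hdiff.continuous.aestronglyMeasurable
    have hgl2 : MemLp g 2 volume :=
      hu.2.1.of_le_mul hgm (Filter.Eventually.of_forall hgb')
    have hgdm : AEStronglyMeasurable (deriv g) volume := aestronglyMeasurable_deriv g volume
    have hgdl2 : MemLp (deriv g) 2 volume :=
      hu.2.2.of_le_mul hgdm (Filter.Eventually.of_forall hbnd')
    refine ⟨⟨hdiff, hgl2, hgdl2⟩, ?_⟩
    -- norm estimate
    have hA : Integrable (fun x => ‖u x‖ ^ 2) volume := hu.2.1.norm.integrable_sq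
    have hB : Integrable (fun x => ‖deriv u x‖ ^ 2) volume := hu.2.2.norm.integrable_sq
    set C : ℝ := (α + 2) * M ^ α with hCdef
    have hC1 : (1:ℝ) ≤ α + 2 := by linarith
    have hCnn : 0 ≤ C := mul_nonneg (by linarith) hMa
    have h1 : (∫ x : ℝ, ‖g x‖ ^ 2) ≤ ∫ x : ℝ, C ^ 2 * ‖u x‖ ^ 2 := by
      refine integral_mono_of_nonneg (Filter.Eventually.of_forall fun x => sq_nonneg _)
        (hA.const_mul _) (Filter.Eventually.of_forall fun x => ?_)
      have h2 := hgb' x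
      have h3 : M ^ α ≤ C := by nlinarith
      have h4 : ‖g x‖ ≤ C * ‖u x‖ := h2.trans (by nlinarith [norm_nonneg (u x)])
      calc ‖g x‖ ^ 2 ≤ (C * ‖u x‖) ^ 2 := by
            exact pow_le_pow_left₀ (norm_nonneg _) h4 2
        _ = C ^ 2 * ‖u x‖ ^ 2 := by ring
    have h2 : (∫ x : ℝ, ‖deriv g x‖ ^ 2) ≤ ∫ x : ℝ, C ^ 2 * ‖deriv u x‖ ^ 2 := by
      refine integral_mono_of_nonneg (Filter.Eventually.of_forall fun x => sq_nonneg _)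
        (hB.const_mul _) (Filter.Eventually.of_forall fun x => ?_)
      calc ‖deriv g x‖ ^ 2 ≤ (C * ‖deriv u x‖) ^ 2 :=
            pow_le_pow_left₀ (norm_nonneg _) (hbnd' x) 2
        _ = C ^ 2 * ‖deriv u x‖ ^ 2 := by ring
    have hIc1 : (∫ x : ℝ, C ^ 2 * ‖u x‖ ^ 2) = C ^ 2 * ∫ x : ℝ, ‖u x‖ ^ 2 :=
      integral_const_mul _ _
    have hIc2 : (∫ x : ℝ, C ^ 2 * ‖deriv u x‖ ^ 2) = C ^ 2 * ∫ x : ℝ, ‖deriv u x‖ ^ 2 :=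
      integral_const_mul _ _
    have hfinal : H1Norm g ≤ C * H1Norm u := by
      rw [H1Norm, H1Norm]
      have hsum : (∫ x : ℝ, ‖g x‖ ^ 2) + (∫ x : ℝ, ‖deriv g x‖ ^ 2) ≤
          C ^ 2 * ((∫ x : ℝ, ‖u x‖ ^ 2) + ∫ x : ℝ, ‖deriv u x‖ ^ 2) := by
        rw [mul_add, ← hIc1, ← hIc2]; linarith
      calc Real.sqrt ((∫ x : ℝ, ‖g x‖ ^ 2) + ∫ x : ℝ, ‖deriv g x‖ ^ 2)
          ≤ Real.sqrt (C ^ 2 * ((∫ x : ℝ, ‖u x‖ ^ 2) + ∫ x : ℝ, ‖deriv u x‖ ^ 2)) :=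
            Real.sqrt_le_sqrt hsum
        _ = C * Real.sqrt ((∫ x : ℝ, ‖u x‖ ^ 2) + ∫ x : ℝ, ‖deriv u x‖ ^ 2) := by
            rw [Real.sqrt_mul (sq_nonneg C), Real.sqrt_sq hCnn]
    refine hfinal.trans ?_
    have hMa' : M ^ α = c₁ ^ α * H1Norm u ^ α := Real.mul_rpow hc₁pos.le hHnn
    have hH1 : H1Norm u ^ α * H1Norm u = H1Norm u ^ (α + 1) :=
      (Real.rpow_add_one hHpos.ne' α).symm
    rw [hCdef, hMa', ← hH1]
    ring_nf
    exact le_of_eq (by ring)
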